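/- Let a ≡ 1 (mod 4) with a ≥ 1, i ≥ 0, and n = (16a+17)a + 3 + (4a+1)i + (7a+3)/2 + l with 0 ≤ l ≤ (a−3)/2 (assuming a ≥ 3). Then with m = 3a+1+n and x = 4a+5+i, the minimum of |a·x|_m, |(a+1)·x|_m, |(2a+1)·x|_m, |(3a+1)·x|_m, |n·x|_m equals 4a(a+1) + ai + (a+1)/2 + l; consequently κ({a, a+1, 2a+1, 3a+1, n}) ≥ (4a(a+1) + (a+1)/2 + ai + l)/(3a+n+1). -/
import Mathlib


/-- `absMod y m` is the distance from `y` to the nearest multiple of `m`. -/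
def absMod (y m : ℕ) : ℕ := min (y % m) (m - y % m)

/-- `S` is an `M`-set: no two (distinct) elements of `S` differ by an element of `M`. -/
def isMSet (M S : Set ℕ) : Prop := ∀ x ∈ S, ∀ y ∈ S, x ≠ y → x - y ∉ M

/-- The Cantor--Gordon parameter κ(M). -/
noncomputable def kappa (M : Set ℕ) : ℝ :=
  sSup {q : ℝ | ∃ c m : ℕ, 0 < m ∧ Nat.Coprime c m ∧
    q = sInf {r : ℝ | ∃ k ∈ M, r = (absMod (c * k) m : ℝ)} / m}

/-- Upper asymptotic density of a set of nonnegative integers. -/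
noncomputable def upperDensity (S : Set ℕ) : ℝ :=
  Filter.limsup (fun x : ℕ => ((S ∩ Set.Iic x).ncard : ℝ) / x) Filter.atTop

/-- Motzkin's maximal density μ(M) over all M-sets. -/
noncomputable def mu (M : Set ℕ) : ℝ :=
  sSup {d : ℝ | ∃ S : Set ℕ, isMSet M S ∧ d = upperDensity S}

lemma absMod_le (y m : ℕ) : absMod y m ≤ m :=
  le_trans (min_le_right _ _) (Nat.sub_le _ _)

lemma absMod_mul_left (d y m : ℕ) : absMod (d*y) (d*m) = d * absMod y m := by
  unfold absMod
  rw [Nat.mul_mod_mul_left, ← Nat.mul_sub, Nat.mul_min_mul_left]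

lemma absMod_eq (m q r s : ℕ) (h2 : m = r + s) : absMod (q*m + r) m = min r s := by
  unfold absMod
  rcases Nat.eq_zero_or_pos s with hs | hs
  · subst hs
    simp only [Nat.add_zero] at h2
    subst h2
    simp [Nat.add_mul_mod_self_left, Nat.mul_add_mod]
  · have hr : r < m := by omega
    have : (q*m + r) % m = r := by
      rw [Nat.add_comm, Nat.add_mul_mod_self_right, Nat.mod_eq_of_lt hr]
    rw [this]
    omega

lemma key (t i l : ℕ) (ht : 1 ≤ t) (hl : l + 1 ≤ 2*t) :
    min (min (absMod ((4*t+1)*(4*(4*t+1)+5+i)) (3*(4*t+1)+1+(256*t^2+210*t+41+(16*t+5)*i+l)))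
        (absMod ((4*t+1+1)*(4*(4*t+1)+5+i)) (3*(4*t+1)+1+(256*t^2+210*t+41+(16*t+5)*i+l))))
      (min (absMod ((2*(4*t+1)+1)*(4*(4*t+1)+5+i)) (3*(4*t+1)+1+(256*t^2+210*t+41+(16*t+5)*i+l)))
        (min (absMod ((3*(4*t+1)+1)*(4*(4*t+1)+5+i)) (3*(4*t+1)+1+(256*t^2+210*t+41+(16*t+5)*i+l)))
          (absMod ((256*t^2+210*t+41+(16*t+5)*i+l)*(4*(4*t+1)+5+i)) (3*(4*t+1)+1+(256*t^2+210*t+41+(16*t+5)*i+l)))))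
      = 64*t^2+50*t+9+(4*t+1)*i+l := by
  have hM : 3*(4*t+1)+1+(256*t^2+210*t+41+(16*t+5)*i+l) = 256*t^2+222*t+45+(16*t+5)*i+l := by ring
  rw [hM]
  rw [show (4*t+1)*(4*(4*t+1)+5+i) = 0*(256*t^2+222*t+45+(16*t+5)*i+l) + (64*t^2+52*t+9+(4*t+1)*i) from by ring,
      absMod_eq _ _ _ (192*t^2+170*t+36+(12*t+4)*i+l) (by ring)]
  rw [show (4*t+1+1)*(4*(4*t+1)+5+i) = 0*(256*t^2+222*t+45+(16*t+5)*i+l) + (64*t^2+68*t+18+(4*t+2)*i) from by ring,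
      absMod_eq _ _ _ (192*t^2+154*t+27+(12*t+3)*i+l) (by ring)]
  rw [show (2*(4*t+1)+1)*(4*(4*t+1)+5+i) = 0*(256*t^2+222*t+45+(16*t+5)*i+l) + (128*t^2+120*t+27+(8*t+3)*i) from by ring,
      absMod_eq _ _ _ (128*t^2+102*t+18+(8*t+2)*i+l) (by ring)]
  rw [show (3*(4*t+1)+1)*(4*(4*t+1)+5+i) = 0*(256*t^2+222*t+45+(16*t+5)*i+l) + (192*t^2+172*t+36+(12*t+4)*i) from by ring,
      absMod_eq _ _ _ (64*t^2+50*t+9+(4*t+1)*i+l) (by ring)]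
  rw [show (256*t^2+210*t+41+(16*t+5)*i+l)*(4*(4*t+1)+5+i)
      = (16*t+8+i)*(256*t^2+222*t+45+(16*t+5)*i+l) + (64*t^2+50*t+9+(4*t+1)*i+l) from by ring,
      absMod_eq _ _ _ (192*t^2+172*t+36+(12*t+4)*i) (by ring)]
  have e1 : min (64*t^2+52*t+9+(4*t+1)*i) (192*t^2+170*t+36+(12*t+4)*i+l)
      = 64*t^2+52*t+9+(4*t+1)*i := min_eq_left (by nlinarith)
  have e2 : min (64*t^2+68*t+18+(4*t+2)*i) (192*t^2+154*t+27+(12*t+3)*i+l)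
      = 64*t^2+68*t+18+(4*t+2)*i := min_eq_left (by nlinarith)
  have e3 : min (128*t^2+120*t+27+(8*t+3)*i) (128*t^2+102*t+18+(8*t+2)*i+l)
      = 128*t^2+102*t+18+(8*t+2)*i+l := min_eq_right (by nlinarith)
  have e4 : min (192*t^2+172*t+36+(12*t+4)*i) (64*t^2+50*t+9+(4*t+1)*i+l)
      = 64*t^2+50*t+9+(4*t+1)*i+l := min_eq_right (by nlinarith)
  have e5 : min (64*t^2+50*t+9+(4*t+1)*i+l) (192*t^2+172*t+36+(12*t+4)*i)
      = 64*t^2+50*t+9+(4*t+1)*i+l := min_eq_left (by nlinarith)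
  rw [e1, e2, e3, e4, e5]
  have f1 : min (64*t^2+52*t+9+(4*t+1)*i) (64*t^2+68*t+18+(4*t+2)*i)
      = 64*t^2+52*t+9+(4*t+1)*i := min_eq_left (by nlinarith)
  have f2 : min (64*t^2+50*t+9+(4*t+1)*i+l) (64*t^2+50*t+9+(4*t+1)*i+l)
      = 64*t^2+50*t+9+(4*t+1)*i+l := min_self _
  have f3 : min (128*t^2+102*t+18+(8*t+2)*i+l) (64*t^2+50*t+9+(4*t+1)*i+l)
      = 64*t^2+50*t+9+(4*t+1)*i+l := min_eq_right (by nlinarith)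
  rw [f1, f2, f3]
  exact min_eq_right (by nlinarith)

lemma sInf5 (p q r s u : ℝ) :
    sInf ({p, q, r, s, u} : Set ℝ) = min (min p q) (min r (min s u)) := by
  rw [csInf_insert (Set.toFinite _).bddBelow (by simp),
      csInf_insert (Set.toFinite _).bddBelow (by simp),
      csInf_insert (Set.toFinite _).bddBelow (by simp),
      csInf_insert (Set.toFinite _).bddBelow (by simp), csInf_singleton]
  exact (min_assoc _ _ _).symm

lemma kappa_ge_aux (a b cc dd e x mv v : ℕ) (hmv : 0 < mv)
    (hmin : min (min (absMod (a*x) mv) (absMod (b*x) mv))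
      (min (absMod (cc*x) mv) (min (absMod (dd*x) mv) (absMod (e*x) mv))) = v) :
    kappa {a, b, cc, dd, e} ≥ (v:ℝ)/(mv:ℝ) := by
  classical
  set d := Nat.gcd x mv with hd'
  have hd : 0 < d := Nat.gcd_pos_of_pos_right _ hmv
  set c := x / d with hc'
  set m' := mv / d with hm''
  have hxc : d * c = x := Nat.mul_div_cancel' (Nat.gcd_dvd_left x mv)
  have hmm' : d * m' = mv := Nat.mul_div_cancel' (Nat.gcd_dvd_right x mv)
  have hm'pos : 0 < m' := by
    rcases Nat.eq_zero_or_pos m' with h | h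
    · rw [h, Nat.mul_zero] at hmm'; omega
    · exact h
  have hcop : Nat.Coprime c m' := Nat.coprime_div_gcd_div_gcd hd
  have hG : ∀ k : ℕ, d * absMod (c*k) m' = absMod (k*x) mv := by
    intro k
    have h1 : k * x = d * (c * k) := by rw [← hxc]; ring
    rw [h1, ← hmm', absMod_mul_left]
  set F : ℕ → ℕ := fun k => absMod (c*k) m' with hF
  have hv : d * min (min (F a) (F b)) (min (F cc) (min (F dd) (F e))) = v := by
    simp only [hF, ← Nat.mul_min_mul_left, hG]
    exact hmin
  have hR : {r : ℝ | ∃ k ∈ ({a, b, cc, dd, e} : Set ℕ), r = (absMod (c * k) m' : ℝ)}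
      = ({(F a : ℝ), (F b : ℝ), (F cc : ℝ), (F dd : ℝ), (F e : ℝ)} : Set ℝ) := by
    ext r
    simp only [Set.mem_setOf_eq, Set.mem_insert_iff, Set.mem_singleton_iff, hF]
    constructor
    · rintro ⟨k, hk, rfl⟩
      rcases hk with rfl | rfl | rfl | rfl | rfl <;> tauto
    · rintro (rfl | rfl | rfl | rfl | rfl)
      exacts [⟨a, by tauto, rfl⟩, ⟨b, by tauto, rfl⟩, ⟨cc, by tauto, rfl⟩,
        ⟨dd, by tauto, rfl⟩, ⟨e, by tauto, rfl⟩]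
  have hsInf : sInf {r : ℝ | ∃ k ∈ ({a, b, cc, dd, e} : Set ℕ), r = (absMod (c * k) m' : ℝ)}
      = ((min (min (F a) (F b)) (min (F cc) (min (F dd) (F e))) : ℕ) : ℝ) := by
    rw [hR, sInf5]
    push_cast
    rfl
  have hq : (v:ℝ)/(mv:ℝ)
      = sInf {r : ℝ | ∃ k ∈ ({a, b, cc, dd, e} : Set ℕ), r = (absMod (c * k) m' : ℝ)} / m' := by
    rw [hsInf, ← hv, ← hmm']
    push_cast
    rw [mul_div_mul_left _ _ (by exact_mod_cast hd.ne')]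
  have hbdd : BddAbove {q : ℝ | ∃ c₀ m₀ : ℕ, 0 < m₀ ∧ Nat.Coprime c₀ m₀ ∧
      q = sInf {r : ℝ | ∃ k ∈ ({a, b, cc, dd, e} : Set ℕ), r = (absMod (c₀ * k) m₀ : ℝ)} / m₀} := by
    refine ⟨1, ?_⟩
    rintro q ⟨c₀, m₀, hm₀, _, rfl⟩
    have hbb : BddBelow {r : ℝ | ∃ k ∈ ({a, b, cc, dd, e} : Set ℕ), r = (absMod (c₀ * k) m₀ : ℝ)} := by
      refine ⟨0, ?_⟩
      rintro r ⟨k, hk, rfl⟩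
      positivity
    have hmem : ((absMod (c₀ * a) m₀ : ℕ) : ℝ)
        ∈ {r : ℝ | ∃ k ∈ ({a, b, cc, dd, e} : Set ℕ), r = (absMod (c₀ * k) m₀ : ℝ)} :=
      ⟨a, by simp, rfl⟩
    have h1 := csInf_le hbb hmem
    have h2 : ((absMod (c₀ * a) m₀ : ℕ) : ℝ) ≤ (m₀ : ℝ) := by exact_mod_cast absMod_le _ _
    rw [div_le_one (by exact_mod_cast hm₀)]
    linarith
  unfold kappa
  rw [ge_iff_le, hq]
  exact le_csSup hbdd ⟨c, m', hm'pos, hcop, rfl⟩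

theorem stmt10 (a i l n : ℕ) (ha : 3 ≤ a) (ha4 : a % 4 = 1)
    (hl : l ≤ (a-3)/2)
    (hn : n = (16*a+17)*a + 3 + (4*a+1)*i + (7*a+3)/2 + l) :
    min (min (absMod (a*(4*a+5+i)) (3*a+1+n)) (absMod ((a+1)*(4*a+5+i)) (3*a+1+n)))
      (min (absMod ((2*a+1)*(4*a+5+i)) (3*a+1+n))
        (min (absMod ((3*a+1)*(4*a+5+i)) (3*a+1+n)) (absMod (n*(4*a+5+i)) (3*a+1+n))))
          = 4*a*(a+1) + a*i + (a+1)/2 + l ∧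
    kappa {a, a+1, 2*a+1, 3*a+1, n} ≥ (4*a*(a+1) + (a+1)/2 + a*i + l : ℝ) / (3*a+n+1) := by
  obtain ⟨t, rfl⟩ : ∃ t, a = 4*t+1 := ⟨a/4, by omega⟩
  have ht : 1 ≤ t := by omega
  have hl' : l + 1 ≤ 2*t := by omega
  have hn' : n = 256*t^2+210*t+41+(16*t+5)*i+l := by
    rw [hn, show (7*(4*t+1)+3)/2 = 14*t+5 from by omega]; ring
  subst hn'
  constructor
  · rw [key t i l ht hl', show (4*t+1+1)/2 = 2*t+1 from by omega]
    ring
  · rw [ge_iff_le]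
    refine le_trans (le_of_eq ?_) (kappa_ge_aux (4*t+1) (4*t+1+1) (2*(4*t+1)+1) (3*(4*t+1)+1)
      (256*t^2+210*t+41+(16*t+5)*i+l) (4*(4*t+1)+5+i)
      (3*(4*t+1)+1+(256*t^2+210*t+41+(16*t+5)*i+l)) (64*t^2+50*t+9+(4*t+1)*i+l)
      (by positivity) (key t i l ht hl'))
    push_cast
    ring
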